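/- Let θ ∈ ℝ with cos(θ/2) ≠ 0, and suppose ω = 2(1 − cos θ). If there exist natural numbers m, n with 1 ≤ m < n and τ_m = τ_n, then θ is a rational multiple of π, i.e. there exists a rational number c with θ = c·π. -/

import Mathlib

/-!
The matrix `Y X⁻¹` has trace `2 - ω = 2 cos θ` and determinant `1`, so by Cayley–Hamilton
`τ (n + 2) = 2 cos θ · τ (n + 1) - τ n`, with `τ 0 = τ 1 = 2`. The sequence `2 cos ((2n - 1) θ/2)`
satisfies the same recurrence with initial values `cos (θ/2)` times those, hence
`cos (θ/2) · τ n = 2 cos ((2n - 1) θ/2)`. A repetition `τ m = τ n` thus forces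
`(2n - 1) θ/2 = 2kπ ± (2m - 1) θ/2`, and since `m < n` and `m + n ≥ 2` this can be solved for `θ`.
-/

open Matrix

/-- The matrix `X = [[1,1],[0,1]]`. -/
noncomputable def Xmat : Matrix (Fin 2) (Fin 2) ℂ := !![1, 1; 0, 1]

/-- The matrix `Y = [[1,0],[ω,1]]`. -/
noncomputable def Ymat (ω : ℂ) : Matrix (Fin 2) (Fin 2) ℂ := !![1, 0; ω, 1]

/-- `τ n` is the trace of `X ⬝ (Y ⬝ X⁻¹)^n`. -/
noncomputable def τ (ω : ℂ) (n : ℕ) : ℂ := (Xmat * (Ymat ω * Xmat⁻¹) ^ n).trace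

namespace Matrix

variable {R : Type*} [CommRing R]

theorem sq_fin_two_eq_trace_smul_sub_det_smul (A : Matrix (Fin 2) (Fin 2) R) :
    A ^ 2 = A.trace • A - A.det • 1 := by
  ext i j
  fin_cases i <;> fin_cases j <;>
    simp [sq, mul_apply, trace_fin_two, det_fin_two] <;> ring

theorem trace_mul_pow_add_two (A B : Matrix (Fin 2) (Fin 2) R) (n : ℕ) :
    (B * A ^ (n + 2)).trace = A.trace * (B * A ^ (n + 1)).trace - A.det * (B * A ^ n).trace := by
  rw [pow_add, sq_fin_two_eq_trace_smul_sub_det_smul, Matrix.mul_sub, Matrix.mul_sub,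
    Matrix.mul_smul, Matrix.mul_smul, Matrix.mul_smul, Matrix.mul_smul, Matrix.mul_one, trace_sub,
    trace_smul, trace_smul, smul_eq_mul, smul_eq_mul, pow_succ]

end Matrix

theorem Xmat_inv : Xmat⁻¹ = !![1, -1; 0, 1] :=
  inv_eq_right_inv <| by ext i j; fin_cases i <;> fin_cases j <;> simp [Xmat]

theorem Ymat_mul_Xmat_inv (ω : ℂ) : Ymat ω * Xmat⁻¹ = !![1, -1; ω, 1 - ω] := by
  rw [Xmat_inv, Ymat]
  ext i j
  fin_cases i <;> fin_cases j <;> simp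
  ring

theorem τ_zero (ω : ℂ) : τ ω 0 = 2 := by
  norm_num [τ, Xmat, trace_fin_two]

theorem τ_one (ω : ℂ) : τ ω 1 = 2 := by
  rw [τ, pow_one, Ymat_mul_Xmat_inv, Xmat, trace_fin_two]
  simp
  ring

theorem τ_add_two (ω : ℂ) (n : ℕ) : τ ω (n + 2) = (2 - ω) * τ ω (n + 1) - τ ω n := by
  have htrace : (Ymat ω * Xmat⁻¹).trace = 2 - ω := by
    rw [Ymat_mul_Xmat_inv, trace_fin_two]; simp; ring
  have hdet : (Ymat ω * Xmat⁻¹).det = 1 := by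
    rw [Ymat_mul_Xmat_inv, det_fin_two]; simp
  rw [τ, trace_mul_pow_add_two, htrace, hdet, one_mul, τ, τ]

theorem cos_half_mul_τ {ω : ℂ} {θ : ℝ} (hω : ω = 2 * (1 - (Real.cos θ : ℂ))) (n : ℕ) :
    (Real.cos (θ / 2) : ℂ) * τ ω n = 2 * Real.cos ((2 * n - 1 : ℤ) * (θ / 2)) := by
  induction n using Nat.twoStepInduction with
  | zero => simp [τ_zero, mul_comm]
  | one => norm_num [τ_one, mul_comm]
  | more n ih₀ ih₁ =>
    have hcos : Real.cos ((2 * (n + 2 : ℕ) - 1 : ℤ) * (θ / 2))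
        = 2 * Real.cos θ * Real.cos ((2 * (n + 1 : ℕ) - 1 : ℤ) * (θ / 2))
          - Real.cos ((2 * n - 1 : ℤ) * (θ / 2)) := by
      push_cast
      rw [show (2 * ((n : ℝ) + 2) - 1) * (θ / 2) = (2 * ((n : ℝ) + 1) - 1) * (θ / 2) + θ by ring,
        show (2 * (n : ℝ) - 1) * (θ / 2) = (2 * ((n : ℝ) + 1) - 1) * (θ / 2) - θ by ring,
        Real.cos_add, Real.cos_sub]
      ring
    have h2ω : 2 - ω = (2 * Real.cos θ : ℝ) := by rw [hω]; push_cast; ring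
    rw [τ_add_two, h2ω, hcos]
    push_cast at ih₀ ih₁ ⊢
    linear_combination 2 * Complex.cos θ * ih₁ - ih₀

theorem Real.exists_rat_eq_mul_pi_of_cos_int_mul_eq {a b : ℤ} (hne : a ≠ b) (hsum : a + b ≠ 0)
    {x : ℝ} (h : Real.cos (a * x) = Real.cos (b * x)) : ∃ c : ℚ, x = c * Real.pi := by
  obtain ⟨k, hk | hk⟩ := Real.cos_eq_cos_iff.mp h
  · have hba : (b - a : ℝ) ≠ 0 := sub_ne_zero.mpr (by exact_mod_cast hne.symm)
    exact ⟨2 * k / (b - a), by push_cast; field_simp; linarith⟩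
  · have hab : (a + b : ℝ) ≠ 0 := by exact_mod_cast hsum
    exact ⟨2 * k / (a + b), by push_cast; field_simp; linarith⟩

theorem tau_repeat_implies_rational_general (ω : ℂ) (θ : ℝ)
    (hω : ω = 2 * (1 - (Real.cos θ : ℂ)))
    (h : ∃ m n : ℕ, 1 ≤ m ∧ m < n ∧ τ ω m = τ ω n) :
    ∃ c : ℚ, θ = (c : ℝ) * Real.pi := by
  obtain ⟨m, n, hm, hmn, heq⟩ := h
  have hcos : Real.cos ((2 * m - 1 : ℤ) * (θ / 2)) = Real.cos ((2 * n - 1 : ℤ) * (θ / 2)) := by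
    have h2 := cos_half_mul_τ hω m
    rw [heq, cos_half_mul_τ hω n] at h2
    exact_mod_cast (mul_left_cancel₀ two_ne_zero h2).symm
  obtain ⟨c, hc⟩ := Real.exists_rat_eq_mul_pi_of_cos_int_mul_eq (by omega) (by omega) hcos
  exact ⟨2 * c, by push_cast; linarith⟩

theorem tau_repeat_implies_rational (ω : ℂ) (θ : ℝ) (hcos : Real.cos (θ / 2) ≠ 0)
    (hω : ω = 2 * (1 - (Real.cos θ : ℂ)))
    (h : ∃ m n : ℕ, 1 ≤ m ∧ m < n ∧ τ ω m = τ ω n) :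
    ∃ c : ℚ, θ = (c : ℝ) * Real.pi :=
  tau_repeat_implies_rational_general ω θ hω h
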